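/- arXiv:1301.3473 — 3 statements merged into one kernel-verified Lean document; each statement's English description precedes it below -/
import Mathlib

section
/- With Y = (1−Z)ε* + Z(α₀ + β₀X + ε), assuming additionally that ε* and ε have zero third moments and finite third moments and X has finite third moment, E(Y³ | X) = π₀α₀(α₀² + 3σ₀²) + 3π₀β₀(α₀² + σ₀²)X + 3π₀α₀β₀²X² + π₀β₀³X³ almost surely, where σ₀² = E(ε²). -/
/-!
Since `Z ∈ {0, 1}`, `Y³ = (1 - Z) (0 + ε*)³ + Z (α₀ + β₀ X + ε)³`, so it suffices to treat
`Z' (h X + W)ⁿ` with `Z' ⟂ (X, W)` and `X ⟂ W`. The binomial expansion writes it as a sum of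
terms `g(X) · Z' Wᵏ`, and `(Z', W)` is independent of `X`, so each term has conditional
expectation `g(X) E[Z'] E[Wᵏ]`. With `E ε = E ε³ = E ε*³ = 0` only the even moments survive.
-/

open MeasureTheory ProbabilityTheory

theorem MeasureTheory.MemLp.integrable_pow_of_le {Ω : Type*} [MeasurableSpace Ω]
    {μ : Measure Ω} [IsFiniteMeasure μ] {f : Ω → ℝ} {p : ENNReal} {k : ℕ}
    (hf : MemLp f p μ) (hk : (k : ENNReal) ≤ p) : Integrable (fun ω => f ω ^ k) μ := by
  refine (integrable_norm_iff (hf.aestronglyMeasurable.pow k)).1 ?_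
  simpa only [Pi.pow_apply, norm_pow] using (hf.mono_exponent hk).integrable_norm_pow'

theorem mul_add_pow_eq_sum {Ω β : Type*} (n : ℕ) (X : Ω → β) (Z ε : Ω → ℝ) (h : β → ℝ) :
    (fun ω => Z ω * (h (X ω) + ε ω) ^ n)
      = ∑ k ∈ Finset.range (n + 1),
          ((fun x => (n.choose k : ℝ) * h x ^ (n - k)) ∘ X) * fun ω => Z ω * ε ω ^ k := by
  funext ω
  simp only [add_comm (h _), add_pow, Finset.mul_sum, Finset.sum_apply, Pi.mul_apply,
    Function.comp_apply]
  exact Finset.sum_congr rfl fun k _ => by ring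

namespace ProbabilityTheory

variable {Ω α β γ : Type*} [MeasurableSpace Ω] [MeasurableSpace α] [MeasurableSpace β]
  [MeasurableSpace γ] {μ : Measure Ω} [IsFiniteMeasure μ]

theorem IndepFun.prodMk_indepFun_of_indepFun {Z : Ω → α} {X : Ω → β} {W : Ω → γ}
    (hZ : Measurable Z) (hX : Measurable X) (hW : Measurable W)
    (hZXW : IndepFun Z (fun ω => (X ω, W ω)) μ) (hXW : IndepFun X W μ) :
    IndepFun (fun ω => (Z ω, W ω)) X μ := by
  rw [indepFun_iff_map_prod_eq_prod_map_map (hZ.prodMk hW).aemeasurable hX.aemeasurable,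
    (hZXW.comp measurable_id measurable_snd).map_prod_eq_prod_map_map hZ.aemeasurable
      hW.aemeasurable]
  refine Measure.ext_prod₃' fun {s t u} hs ht hu => ?_
  have hpre : (fun ω => ((Z ω, W ω), X ω)) ⁻¹' ((s ×ˢ t) ×ˢ u)
      = Z ⁻¹' s ∩ (fun ω => (X ω, W ω)) ⁻¹' (u ×ˢ t) := by
    ext ω
    simp only [Set.mem_preimage, Set.mem_prod, Set.mem_inter_iff]
    tauto
  rw [Measure.map_apply ((hZ.prodMk hW).prodMk hX) ((hs.prod ht).prod hu), hpre,
    hZXW.measure_inter_preimage_eq_mul _ _ hs (hu.prod ht), Set.mk_preimage_prod,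
    hXW.measure_inter_preimage_eq_mul _ _ hu ht, Measure.prod_prod, Measure.prod_prod,
    Measure.map_apply hZ hs, Measure.map_apply hW ht, Measure.map_apply hX hu]
  ring

variable {X : Ω → β} {U Z ε : Ω → ℝ} {g h : β → ℝ} {n : ℕ}

theorem condExp_comp_mul_of_indepFun (hX : Measurable X) (hU : Measurable U) (hg : Measurable g)
    (hUX : IndepFun U X μ) (hgXU : Integrable ((g ∘ X) * U) μ) (hUint : Integrable U μ) :
    μ[(g ∘ X) * U | MeasurableSpace.comap X inferInstance] =ᵐ[μ] fun ω => g (X ω) * μ[U] := by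
  have hgX : StronglyMeasurable[MeasurableSpace.comap X inferInstance] (g ∘ X) :=
    (hg.comp (comap_measurable X)).stronglyMeasurable
  have hU_const : μ[U | MeasurableSpace.comap X inferInstance] =ᵐ[μ] fun _ => μ[U] :=
    condExp_indep_eq hU.comap_le hX.comap_le (comap_measurable U).stronglyMeasurable hUX
  filter_upwards [condExp_mul_of_stronglyMeasurable_left hgX hgXU hUint, hU_const]
    with ω h_pull h_const
  rw [h_pull, Pi.mul_apply, h_const, Function.comp_apply]

theorem integrable_mul_pow_of_indepFun (hZε : IndepFun Z ε μ) (hZ : Integrable Z μ)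
    (hεn : MemLp ε n μ) {k : ℕ} (hk : k ≤ n) : Integrable (fun ω => Z ω * ε ω ^ k) μ :=
  (hZε.comp measurable_id (measurable_id.pow_const k)).integrable_mul hZ
    (hεn.integrable_pow_of_le (by exact_mod_cast hk))

theorem integrable_mul_add_pow_summand (hh : Measurable h)
    (hZεX : IndepFun (fun ω => (Z ω, ε ω)) X μ) (hZε : IndepFun Z ε μ) (hZ : Integrable Z μ)
    (hhX : MemLp (h ∘ X) n μ) (hεn : MemLp ε n μ) {k : ℕ} (hk : k ≤ n) :
    Integrable (((fun x => (n.choose k : ℝ) * h x ^ (n - k)) ∘ X) * fun ω => Z ω * ε ω ^ k) μ :=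
  IndepFun.integrable_mul
    (hZεX.symm.comp (by fun_prop) (measurable_fst.mul (measurable_snd.pow_const k)))
    ((hhX.integrable_pow_of_le (by exact_mod_cast n.sub_le k)).const_mul _)
    (integrable_mul_pow_of_indepFun hZε hZ hεn hk)

theorem integrable_mul_add_pow_of_indepFun (hh : Measurable h)
    (hZεX : IndepFun (fun ω => (Z ω, ε ω)) X μ) (hZε : IndepFun Z ε μ) (hZ : Integrable Z μ)
    (hhX : MemLp (h ∘ X) n μ) (hεn : MemLp ε n μ) :
    Integrable (fun ω => Z ω * (h (X ω) + ε ω) ^ n) μ := by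
  rw [mul_add_pow_eq_sum]
  exact integrable_finsetSum' _ fun k hk => integrable_mul_add_pow_summand hh hZεX hZε hZ hhX hεn
    (Nat.lt_succ_iff.1 (Finset.mem_range.1 hk))

theorem condExp_mul_add_pow_of_indepFun (hX : Measurable X) (hZm : Measurable Z)
    (hεm : Measurable ε) (hh : Measurable h) (hZεX : IndepFun (fun ω => (Z ω, ε ω)) X μ)
    (hZε : IndepFun Z ε μ) (hZ : Integrable Z μ) (hhX : MemLp (h ∘ X) n μ)
    (hεn : MemLp ε n μ) :
    μ[fun ω => Z ω * (h (X ω) + ε ω) ^ n | MeasurableSpace.comap X inferInstance]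
      =ᵐ[μ] fun ω => μ[Z] * ∑ k ∈ Finset.range (n + 1),
        (n.choose k : ℝ) * h (X ω) ^ (n - k) * ∫ ω', ε ω' ^ k ∂μ := by
  have hk {k : ℕ} (hk : k ∈ Finset.range (n + 1)) : k ≤ n :=
    Nat.lt_succ_iff.1 (Finset.mem_range.1 hk)
  rw [mul_add_pow_eq_sum]
  filter_upwards [condExp_finsetSum (fun k hk' =>
      integrable_mul_add_pow_summand hh hZεX hZε hZ hhX hεn (hk hk')) _,
    (Filter.eventually_all_finset _).2 fun k hk' =>
      condExp_comp_mul_of_indepFun (U := fun ω => Z ω * ε ω ^ k) hX (by fun_prop) (by fun_prop)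
        (hZεX.comp (measurable_fst.mul (measurable_snd.pow_const k)) measurable_id)
        (integrable_mul_add_pow_summand hh hZεX hZε hZ hhX hεn (hk hk'))
        (integrable_mul_pow_of_indepFun hZε hZ hεn (hk hk'))] with ω hsum hterm
  rw [hsum, Finset.sum_apply, Finset.sum_congr rfl hterm, Finset.mul_sum]
  refine Finset.sum_congr rfl fun k _ => ?_
  have hmoment : ∫ ω', Z ω' * ε ω' ^ k ∂μ = μ[Z] * ∫ ω', ε ω' ^ k ∂μ :=
    (hZε.comp measurable_id (measurable_id.pow_const k)).integral_mul_eq_mul_integral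
      hZm.aestronglyMeasurable (hεm.pow_const k).aestronglyMeasurable
  rw [hmoment]
  ring

end ProbabilityTheory

theorem condexp_cube_mixture_eq_general
    {Ω : Type*} [MeasurableSpace Ω] (μ : Measure Ω) [IsProbabilityMeasure μ]
    (X Z εstar ε Y : Ω → ℝ) (π₀ α₀ β₀ : ℝ)
    (hX : Measurable X) (hZ : Measurable Z) (hεstar : Measurable εstar) (hε : Measurable ε)
    (hZ01 : ∀ ω, Z ω = 0 ∨ Z ω = 1)
    (hZmean : ∫ ω, Z ω ∂μ = π₀)
    (hXL3 : MemLp X 3 μ)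
    (hεstarL3 : MemLp εstar 3 μ) (hεL3 : MemLp ε 3 μ)
    (hε0 : ∫ ω, ε ω ∂μ = 0)
    (hεstar3 : ∫ ω, (εstar ω) ^ 3 ∂μ = 0) (hε3 : ∫ ω, (ε ω) ^ 3 ∂μ = 0)
    (hindZ : IndepFun Z (fun ω => (X ω, εstar ω, ε ω)) μ)
    (hindXεstar : IndepFun X εstar μ) (hindXε : IndepFun X ε μ)
    (hY : ∀ ω, Y ω = (1 - Z ω) * εstar ω + Z ω * (α₀ + β₀ * X ω + ε ω)) :
    μ[fun ω => (Y ω) ^ 3 | MeasurableSpace.comap X inferInstance]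
      =ᵐ[μ] fun ω =>
        π₀ * α₀ * (α₀ ^ 2 + 3 * ∫ ω', (ε ω') ^ 2 ∂μ)
          + 3 * π₀ * β₀ * (α₀ ^ 2 + ∫ ω', (ε ω') ^ 2 ∂μ) * X ω
          + 3 * π₀ * α₀ * β₀ ^ 2 * (X ω) ^ 2
          + π₀ * β₀ ^ 3 * (X ω) ^ 3 := by
  have hcube : (fun ω => Y ω ^ 3)
      = (fun ω => (1 - Z ω) * ((fun _ => (0 : ℝ)) (X ω) + εstar ω) ^ 3)
        + fun ω => Z ω * ((fun x => α₀ + β₀ * x) (X ω) + ε ω) ^ 3 := by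
    funext ω
    rcases hZ01 ω with h | h <;> simp [hY, h]
  have hZint : Integrable Z μ :=
    (integrable_const (1 : ℝ)).mono' hZ.aestronglyMeasurable
      (.of_forall fun ω => by rcases hZ01 ω with h | h <;> simp [h])
  have h1Zint : Integrable (fun ω => 1 - Z ω) μ := (integrable_const 1).sub hZint
  have hLX : MemLp ((fun x => α₀ + β₀ * x) ∘ X) (3 : ℕ) μ := by
    exact_mod_cast (memLp_const α₀).add (hXL3.const_mul β₀)
  have hεstarL3' : MemLp εstar (3 : ℕ) μ := by exact_mod_cast hεstarL3
  have hεL3' : MemLp ε (3 : ℕ) μ := by exact_mod_cast hεL3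
  have hZε : IndepFun Z ε μ := hindZ.comp measurable_id measurable_snd.snd
  have hZεstar : IndepFun (fun ω => 1 - Z ω) εstar μ :=
    hindZ.comp (measurable_const.sub measurable_id) measurable_snd.fst
  have hZεX : IndepFun (fun ω => (Z ω, ε ω)) X μ :=
    IndepFun.prodMk_indepFun_of_indepFun hZ hX hε
      (hindZ.comp measurable_id (measurable_fst.prodMk measurable_snd.snd)) hindXε
  have hZεstarX : IndepFun (fun ω => (1 - Z ω, εstar ω)) X μ :=
    (IndepFun.prodMk_indepFun_of_indepFun hZ hX hεstar
      (hindZ.comp measurable_id (measurable_fst.prodMk measurable_snd.fst)) hindXεstar).comp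
      ((measurable_const.sub measurable_fst).prodMk measurable_snd) measurable_id
  rw [hcube]
  refine (condExp_add
    (integrable_mul_add_pow_of_indepFun measurable_const hZεstarX hZεstar h1Zint (memLp_const 0)
      hεstarL3')
    (integrable_mul_add_pow_of_indepFun (by fun_prop) hZεX hZε hZint hLX hεL3') _).trans ?_
  refine ((condExp_mul_add_pow_of_indepFun hX (by fun_prop) hεstar measurable_const hZεstarX
      hZεstar h1Zint (memLp_const 0) hεstarL3').add
    (condExp_mul_add_pow_of_indepFun hX hZ hε (by fun_prop) hZεX hZε hZint hLX hεL3')).trans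
    (.of_forall fun ω => ?_)
  simp only [Nat.reduceAdd, Finset.sum_range_succ, Finset.range_one, Finset.sum_singleton,
    Nat.choose_zero_right, Nat.cast_one, tsub_zero, ne_eq, OfNat.ofNat_ne_zero, not_false_eq_true,
    zero_pow, mul_zero, pow_zero, integral_const, probReal_univ, smul_eq_mul, mul_one,
    Nat.choose_one_right, Nat.cast_ofNat, Nat.add_one_sub_one, pow_one, zero_mul, add_zero,
    Nat.choose_succ_self_right, Nat.reduceSub, Nat.choose_self, tsub_self, hεstar3, hZmean, one_mul,
    hε0, hε3, Pi.add_apply, zero_add]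
  ring

/-- Third conditional moment in the two-component mixture of regressions model:
assuming zero third moments for the errors and a finite third moment for `X`,
`E(Y³ | X) = π₀α₀(α₀² + 3σ₀²) + 3π₀β₀(α₀² + σ₀²)X + 3π₀α₀β₀²X² + π₀β₀³X³` a.s.,
where `σ₀² = E(ε²)`. -/
theorem condexp_cube_mixture_eq
    {Ω : Type*} [MeasurableSpace Ω] (μ : Measure Ω) [IsProbabilityMeasure μ]
    (X Z εstar ε Y : Ω → ℝ) (π₀ α₀ β₀ : ℝ)
    (hX : Measurable X) (hZ : Measurable Z) (hεstar : Measurable εstar) (hε : Measurable ε)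
    (hπ₀ : π₀ ∈ Set.Icc (0 : ℝ) 1)
    (hZ01 : ∀ ω, Z ω = 0 ∨ Z ω = 1)
    (hZmean : ∫ ω, Z ω ∂μ = π₀)
    (hXL3 : MemLp X 3 μ)
    (hεstarL3 : MemLp εstar 3 μ) (hεL3 : MemLp ε 3 μ)
    (hεstar0 : ∫ ω, εstar ω ∂μ = 0) (hε0 : ∫ ω, ε ω ∂μ = 0)
    (hεstar3 : ∫ ω, (εstar ω) ^ 3 ∂μ = 0) (hε3 : ∫ ω, (ε ω) ^ 3 ∂μ = 0)
    (hindZ : IndepFun Z (fun ω => (X ω, εstar ω, ε ω)) μ)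
    (hindXεstar : IndepFun X εstar μ) (hindXε : IndepFun X ε μ)
    (hY : ∀ ω, Y ω = (1 - Z ω) * εstar ω + Z ω * (α₀ + β₀ * X ω + ε ω)) :
    μ[fun ω => (Y ω) ^ 3 | MeasurableSpace.comap X inferInstance]
      =ᵐ[μ] fun ω =>
        π₀ * α₀ * (α₀ ^ 2 + 3 * ∫ ω', (ε ω') ^ 2 ∂μ)
          + 3 * π₀ * β₀ * (α₀ ^ 2 + ∫ ω', (ε ω') ^ 2 ∂μ) * X ω
          + 3 * π₀ * α₀ * β₀ ^ 2 * (X ω) ^ 2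
          + π₀ * β₀ ^ 3 * (X ω) ^ 3 :=
  condexp_cube_mixture_eq_general μ X Z εstar ε Y π₀ α₀ β₀ hX hZ hεstar hε hZ01 hZmean hXL3 hεstarL3
    hεL3 hε0 hεstar3 hε3 hindZ hindXεstar hindXε hY
end

section
/- With Y = (1−Z)ε* + Z(α₀ + β₀X + ε) and X having finite fourth moment, cov(X², Y²) = π₀β₀² Var(X²) + 2π₀α₀β₀ cov(X², X). -/
/-!
As `Z ∈ {0, 1}`, `Y² = (1 - Z) ε*² + Z (α₀ + β₀ X + ε)²`, and `Z` is independent of `(X, ε*, ε)`,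
so `E[X² Y²]` and `E[Y²]` are `π₀`-mixtures of the corresponding moments of the two components.
The `ε*`-component does not contribute to the covariance since `X ⟂ ε*`. In the regression
component, independence of `X` and the centred `ε` kills the cross terms and the `E[ε²]` terms
cancel, leaving `π₀ cov(X², (α₀ + β₀ X)²)`, which is expanded in moments of `X`.
-/

open MeasureTheory ProbabilityTheory

lemma sq_one_sub_mul_add_mul {z s t : ℝ} (hz : z = 0 ∨ z = 1) :
    ((1 - z) * s + z * t) ^ 2 = (1 - z) * s ^ 2 + z * t ^ 2 := by
  rcases hz with rfl | rfl <;> ring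

lemma mul_add_sq_eq (f g e : ℝ) : f * (g + e) ^ 2 = f * g ^ 2 + 2 * (f * g * e) + f * e ^ 2 := by
  ring

lemma pow_mul_add_mul_sq_eq (k : ℕ) (α β x : ℝ) :
    x ^ k * (α + β * x) ^ 2 = α ^ 2 * x ^ k + 2 * α * β * x ^ (k + 1) + β ^ 2 * x ^ (k + 2) := by
  ring

section

variable {Ω : Type*} [MeasurableSpace Ω] {μ : Measure Ω} {F G X ε : Ω → ℝ} {n k : ℕ}

lemma MeasureTheory.Integrable.mul_of_mul_sq (hF : Integrable F μ)
    (hFG2 : Integrable (fun ω => F ω * G ω ^ 2) μ) (hG : AEStronglyMeasurable G μ) :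
    Integrable (fun ω => F ω * G ω) μ := by
  -- `|F G| ≤ (|F| + |F| G²) / 2` because `2 |G| ≤ 1 + G²`
  refine ((hF.norm.add hFG2.norm).div_const 2).mono' (hF.1.mul hG) (ae_of_all _ fun ω => ?_)
  simp only [Pi.add_apply, norm_mul, norm_pow, Real.norm_eq_abs]
  nlinarith [mul_nonneg (abs_nonneg (F ω)) (sq_nonneg (|G ω| - 1))]

lemma ProbabilityTheory.IndepFun.mul_of_prodMk
    (hind : IndepFun (fun ω => (F ω, G ω)) ε μ) :
    IndepFun (fun ω => F ω * G ω) ε μ :=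
  hind.comp (φ := fun p : ℝ × ℝ => p.1 * p.2) (by fun_prop) measurable_id

lemma ProbabilityTheory.IndepFun.sq_right_of_prodMk
    (hind : IndepFun (fun ω => (F ω, G ω)) ε μ) :
    IndepFun F (fun ω => ε ω ^ 2) μ :=
  hind.comp (φ := fun p : ℝ × ℝ => p.1) (ψ := fun e : ℝ => e ^ 2) (by fun_prop) (by fun_prop)

lemma integral_one_sub_mul_add_mul_of_indepFun {E : Type*} [MeasurableSpace E]
    {Z : Ω → ℝ} {W : Ω → E} {f g : E → ℝ} (hZ : Integrable Z μ) (hZW : IndepFun Z W μ)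
    (hf : Measurable f) (hg : Measurable g)
    (hfW : Integrable (fun ω => f (W ω)) μ) (hgW : Integrable (fun ω => g (W ω)) μ) :
    ∫ ω, ((1 - Z ω) * f (W ω) + Z ω * g (W ω)) ∂μ
      = (1 - ∫ ω, Z ω ∂μ) * ∫ ω, f (W ω) ∂μ + (∫ ω, Z ω ∂μ) * ∫ ω, g (W ω) ∂μ := by
  have hfZ : IndepFun Z (fun ω => f (W ω)) μ := hZW.comp measurable_id hf
  have hgZ : IndepFun Z (fun ω => g (W ω)) μ := hZW.comp measurable_id hg
  have hZfW : Integrable (fun ω => Z ω * f (W ω)) μ := hfZ.integrable_mul hZ hfW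
  have hZgW : Integrable (fun ω => Z ω * g (W ω)) μ := hgZ.integrable_mul hZ hgW
  have hfW_sub : Integrable (fun ω => f (W ω) - Z ω * f (W ω)) μ := hfW.sub hZfW
  have hsplit : (fun ω => (1 - Z ω) * f (W ω) + Z ω * g (W ω))
      = fun ω => f (W ω) - Z ω * f (W ω) + Z ω * g (W ω) := by
    ext ω; ring
  rw [hsplit, integral_add hfW_sub hZgW, integral_sub hfW hZfW,
    hfZ.integral_fun_mul_eq_mul_integral hZ.1 hfW.1,
    hgZ.integral_fun_mul_eq_mul_integral hZ.1 hgW.1]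
  ring

lemma integral_mul_sq_one_sub_mul_add_mul_of_indepFun {E : Type*} [MeasurableSpace E]
    {Z : Ω → ℝ} {W : Ω → E} {φ s t : E → ℝ} (hZ01 : ∀ ω, Z ω = 0 ∨ Z ω = 1)
    (hZ : Integrable Z μ) (hZW : IndepFun Z W μ)
    (hφ : Measurable φ) (hs : Measurable s) (ht : Measurable t)
    (hφs : Integrable (fun ω => φ (W ω) * s (W ω) ^ 2) μ)
    (hφt : Integrable (fun ω => φ (W ω) * t (W ω) ^ 2) μ) :
    ∫ ω, φ (W ω) * ((1 - Z ω) * s (W ω) + Z ω * t (W ω)) ^ 2 ∂μ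
      = (1 - ∫ ω, Z ω ∂μ) * ∫ ω, φ (W ω) * s (W ω) ^ 2 ∂μ
        + (∫ ω, Z ω ∂μ) * ∫ ω, φ (W ω) * t (W ω) ^ 2 ∂μ := by
  have hsplit : ∀ ω, φ (W ω) * ((1 - Z ω) * s (W ω) + Z ω * t (W ω)) ^ 2
      = (1 - Z ω) * (φ (W ω) * s (W ω) ^ 2) + Z ω * (φ (W ω) * t (W ω) ^ 2) := fun ω => by
    rw [sq_one_sub_mul_add_mul (hZ01 ω)]; ring
  simp_rw [hsplit]
  exact integral_one_sub_mul_add_mul_of_indepFun hZ hZW (f := fun p => φ p * s p ^ 2)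
    (g := fun p => φ p * t p ^ 2) (by fun_prop) (by fun_prop) hφs hφt

variable [IsFiniteMeasure μ]

lemma MeasureTheory.MemLp.integrable_pow_of_le_s6 (hX : MemLp X n μ) (hk : k ≤ n) :
    Integrable (fun ω => X ω ^ k) μ := by
  refine (integrable_norm_iff (f := fun ω => X ω ^ k) (hX.1.pow k)).mp ?_
  simpa only [norm_pow] using integrable_norm_pow_of_le hX.1 hk hX.integrable_norm_pow'

lemma integrable_mul_add_sq_of_indepFun (hind : IndepFun (fun ω => (F ω, G ω)) ε μ)
    (hF : Integrable F μ) (hFG2 : Integrable (fun ω => F ω * G ω ^ 2) μ)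
    (hG : AEStronglyMeasurable G μ) (hε : MemLp ε 2 μ) :
    Integrable (fun ω => F ω * (G ω + ε ω) ^ 2) μ := by
  have hFGε : Integrable (fun ω => F ω * G ω * ε ω) μ :=
    hind.mul_of_prodMk.integrable_mul (hF.mul_of_mul_sq hFG2 hG) (hε.integrable one_le_two)
  have hFε2 : Integrable (fun ω => F ω * ε ω ^ 2) μ :=
    hind.sq_right_of_prodMk.integrable_mul hF hε.integrable_sq
  simp_rw [mul_add_sq_eq]
  exact (hFG2.add (hFGε.const_mul 2)).add hFε2

lemma integral_mul_add_sq_of_indepFun (hind : IndepFun (fun ω => (F ω, G ω)) ε μ)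
    (hF : Integrable F μ) (hFG2 : Integrable (fun ω => F ω * G ω ^ 2) μ)
    (hG : AEStronglyMeasurable G μ) (hε : MemLp ε 2 μ) (hε0 : ∫ ω, ε ω ∂μ = 0) :
    ∫ ω, F ω * (G ω + ε ω) ^ 2 ∂μ
      = ∫ ω, F ω * G ω ^ 2 ∂μ + (∫ ω, F ω ∂μ) * ∫ ω, ε ω ^ 2 ∂μ := by
  have hFGε : Integrable (fun ω => 2 * (F ω * G ω * ε ω)) μ :=
    (hind.mul_of_prodMk.integrable_mul (hF.mul_of_mul_sq hFG2 hG)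
      (hε.integrable one_le_two)).const_mul 2
  have hFε2 : Integrable (fun ω => F ω * ε ω ^ 2) μ :=
    hind.sq_right_of_prodMk.integrable_mul hF hε.integrable_sq
  have hFG2ε : Integrable (fun ω => F ω * G ω ^ 2 + 2 * (F ω * G ω * ε ω)) μ := hFG2.add hFGε
  simp_rw [mul_add_sq_eq]
  rw [integral_add hFG2ε hFε2, integral_add hFG2 hFGε, integral_const_mul,
    hind.mul_of_prodMk.integral_fun_mul_eq_mul_integral (hF.1.mul hG) hε.1,
    hind.sq_right_of_prodMk.integral_fun_mul_eq_mul_integral hF.1 (hε.1.pow 2), hε0]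
  ring

lemma integrable_pow_mul_add_mul_sq (hX : MemLp X n μ) (hk : k + 2 ≤ n) (α β : ℝ) :
    Integrable (fun ω => X ω ^ k * (α + β * X ω) ^ 2) μ := by
  simp_rw [pow_mul_add_mul_sq_eq]
  exact (((hX.integrable_pow_of_le_s6 (by omega)).const_mul _).add
    ((hX.integrable_pow_of_le_s6 (by omega)).const_mul _)).add
    ((hX.integrable_pow_of_le_s6 hk).const_mul _)

lemma integral_pow_mul_add_mul_sq (hX : MemLp X n μ) (hk : k + 2 ≤ n) (α β : ℝ) :
    ∫ ω, X ω ^ k * (α + β * X ω) ^ 2 ∂μ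
      = α ^ 2 * ∫ ω, X ω ^ k ∂μ + 2 * α * β * ∫ ω, X ω ^ (k + 1) ∂μ
        + β ^ 2 * ∫ ω, X ω ^ (k + 2) ∂μ := by
  have h0 : Integrable (fun ω => α ^ 2 * X ω ^ k) μ :=
    (hX.integrable_pow_of_le_s6 (by omega)).const_mul _
  have h1 : Integrable (fun ω => 2 * α * β * X ω ^ (k + 1)) μ :=
    (hX.integrable_pow_of_le_s6 (by omega)).const_mul _
  have h2 : Integrable (fun ω => β ^ 2 * X ω ^ (k + 2)) μ :=
    (hX.integrable_pow_of_le_s6 hk).const_mul _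
  have h01 : Integrable (fun ω => α ^ 2 * X ω ^ k + 2 * α * β * X ω ^ (k + 1)) μ := h0.add h1
  simp_rw [pow_mul_add_mul_sq_eq]
  rw [integral_add h01 h2, integral_add h0 h1, integral_const_mul, integral_const_mul,
    integral_const_mul]

lemma integrable_pow_mul_linear_add_sq (hX : MemLp X n μ) (hk : k + 2 ≤ n)
    (hXε : IndepFun X ε μ) (hε : MemLp ε 2 μ) (α β : ℝ) :
    Integrable (fun ω => X ω ^ k * (α + β * X ω + ε ω) ^ 2) μ :=
  integrable_mul_add_sq_of_indepFun
    (hXε.comp (φ := fun x => (x ^ k, α + β * x)) (by fun_prop) measurable_id)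
    (hX.integrable_pow_of_le_s6 (by omega)) (integrable_pow_mul_add_mul_sq hX hk α β)
    (by have := hX.1; fun_prop) hε

lemma integral_pow_mul_linear_add_sq (hX : MemLp X n μ) (hk : k + 2 ≤ n)
    (hXε : IndepFun X ε μ) (hε : MemLp ε 2 μ) (hε0 : ∫ ω, ε ω ∂μ = 0) (α β : ℝ) :
    ∫ ω, X ω ^ k * (α + β * X ω + ε ω) ^ 2 ∂μ
      = α ^ 2 * ∫ ω, X ω ^ k ∂μ + 2 * α * β * ∫ ω, X ω ^ (k + 1) ∂μ
        + β ^ 2 * ∫ ω, X ω ^ (k + 2) ∂μ + (∫ ω, X ω ^ k ∂μ) * ∫ ω, ε ω ^ 2 ∂μ := by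
  rw [integral_mul_add_sq_of_indepFun (ε := ε)
    (hXε.comp (φ := fun x => (x ^ k, α + β * x)) (by fun_prop) measurable_id)
    (hX.integrable_pow_of_le_s6 (by omega)) (integrable_pow_mul_add_mul_sq hX hk α β)
    (by have := hX.1; fun_prop) hε hε0, integral_pow_mul_add_mul_sq hX hk]

end

theorem cov_Xsq_Ysq_general
    {Ω : Type*} [MeasurableSpace Ω] (μ : Measure Ω) [IsProbabilityMeasure μ]
    (X Z εstar ε Y : Ω → ℝ) (π₀ α₀ β₀ : ℝ)
    (hZ : Measurable Z)
    (hZ01 : ∀ ω, Z ω = 0 ∨ Z ω = 1)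
    (hZmean : ∫ ω, Z ω ∂μ = π₀)
    (hXL4 : MemLp X 4 μ)
    (hεstarL2 : MemLp εstar 2 μ) (hεL2 : MemLp ε 2 μ)
    (hε0 : ∫ ω, ε ω ∂μ = 0)
    (hindZ : IndepFun Z (fun ω => (X ω, εstar ω, ε ω)) μ)
    (hindXεstar : IndepFun X εstar μ) (hindXε : IndepFun X ε μ)
    (hY : ∀ ω, Y ω = (1 - Z ω) * εstar ω + Z ω * (α₀ + β₀ * X ω + ε ω)) :
    (∫ ω, (X ω) ^ 2 * (Y ω) ^ 2 ∂μ) - (∫ ω, (X ω) ^ 2 ∂μ) * (∫ ω, (Y ω) ^ 2 ∂μ)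
      = π₀ * β₀ ^ 2 * ((∫ ω, (X ω) ^ 4 ∂μ) - (∫ ω, (X ω) ^ 2 ∂μ) ^ 2)
        + 2 * π₀ * α₀ * β₀
          * ((∫ ω, (X ω) ^ 3 ∂μ) - (∫ ω, (X ω) ^ 2 ∂μ) * (∫ ω, X ω ∂μ)) := by
  have hX4 : MemLp X (4 : ℕ) μ := by exact_mod_cast hXL4
  have hZint : Integrable Z μ := .of_bound hZ.aestronglyMeasurable 1 <|
    ae_of_all _ fun ω => by rcases hZ01 ω with h | h <;> simp [h]
  have hindX2εstar2 : IndepFun (fun ω => X ω ^ 2) (fun ω => εstar ω ^ 2) μ :=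
    hindXεstar.comp (measurable_id.pow_const 2) (measurable_id.pow_const 2)
  have hA2 := integral_pow_mul_linear_add_sq hX4 (k := 0) (by norm_num) hindXε hεL2 hε0 α₀ β₀
  have hXA2 := integral_pow_mul_linear_add_sq hX4 (k := 2) (by norm_num) hindXε hεL2 hε0 α₀ β₀
  simp only [pow_zero, one_mul, zero_add, pow_one, integral_const, probReal_univ, smul_eq_mul,
    mul_one] at hA2
  simp only [Nat.reduceAdd] at hXA2
  have hY2 : ∫ ω, Y ω ^ 2 ∂μ
      = (1 - π₀) * ∫ ω, εstar ω ^ 2 ∂μ + π₀ * ∫ ω, (α₀ + β₀ * X ω + ε ω) ^ 2 ∂μ := by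
    simpa [hY, hZmean] using integral_mul_sq_one_sub_mul_add_mul_of_indepFun hZ01 hZint hindZ
      (φ := fun _ => 1) (s := fun p => p.2.1) (t := fun p => α₀ + β₀ * p.1 + p.2.2)
      measurable_const (by fun_prop) (by fun_prop) (by simpa using hεstarL2.integrable_sq)
      (by simpa using integrable_pow_mul_linear_add_sq hX4 (k := 0) (by norm_num) hindXε hεL2 α₀ β₀)
  have hXY2 : ∫ ω, X ω ^ 2 * Y ω ^ 2 ∂μ
      = (1 - π₀) * ∫ ω, X ω ^ 2 * εstar ω ^ 2 ∂μ
        + π₀ * ∫ ω, X ω ^ 2 * (α₀ + β₀ * X ω + ε ω) ^ 2 ∂μ := by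
    simp only [hY, ← hZmean]
    exact integral_mul_sq_one_sub_mul_add_mul_of_indepFun hZ01 hZint hindZ
      (φ := fun p => p.1 ^ 2) (s := fun p => p.2.1) (t := fun p => α₀ + β₀ * p.1 + p.2.2)
      (by fun_prop) (by fun_prop) (by fun_prop)
      (hindX2εstar2.integrable_mul (hX4.integrable_pow_of_le_s6 (by norm_num)) hεstarL2.integrable_sq)
      (integrable_pow_mul_linear_add_sq hX4 (k := 2) le_rfl hindXε hεL2 α₀ β₀)
  rw [hXY2, hY2, hA2, hXA2, hindX2εstar2.integral_fun_mul_eq_mul_integral (hXL4.1.pow 2)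
    (hεstarL2.1.pow 2)]
  ring

/-- In the two-component mixture of regressions model, with `X` having a finite fourth
moment, `cov(X², Y²) = π₀β₀² Var(X²) + 2π₀α₀β₀ cov(X², X)`. -/
theorem cov_Xsq_Ysq
    {Ω : Type*} [MeasurableSpace Ω] (μ : Measure Ω) [IsProbabilityMeasure μ]
    (X Z εstar ε Y : Ω → ℝ) (π₀ α₀ β₀ : ℝ)
    (hX : Measurable X) (hZ : Measurable Z) (hεstar : Measurable εstar) (hε : Measurable ε)
    (hπ₀ : π₀ ∈ Set.Icc (0 : ℝ) 1)
    (hZ01 : ∀ ω, Z ω = 0 ∨ Z ω = 1)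
    (hZmean : ∫ ω, Z ω ∂μ = π₀)
    (hXL4 : MemLp X 4 μ)
    (hεstarL2 : MemLp εstar 2 μ) (hεL2 : MemLp ε 2 μ)
    (hεstar0 : ∫ ω, εstar ω ∂μ = 0) (hε0 : ∫ ω, ε ω ∂μ = 0)
    (hindZ : IndepFun Z (fun ω => (X ω, εstar ω, ε ω)) μ)
    (hindXεstar : IndepFun X εstar μ) (hindXε : IndepFun X ε μ)
    (hY : ∀ ω, Y ω = (1 - Z ω) * εstar ω + Z ω * (α₀ + β₀ * X ω + ε ω)) :
    (∫ ω, (X ω) ^ 2 * (Y ω) ^ 2 ∂μ) - (∫ ω, (X ω) ^ 2 ∂μ) * (∫ ω, (Y ω) ^ 2 ∂μ)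
      = π₀ * β₀ ^ 2 * ((∫ ω, (X ω) ^ 4 ∂μ) - (∫ ω, (X ω) ^ 2 ∂μ) ^ 2)
        + 2 * π₀ * α₀ * β₀
          * ((∫ ω, (X ω) ^ 3 ∂μ) - (∫ ω, (X ω) ^ 2 ∂μ) * (∫ ω, X ω ∂μ)) :=
  cov_Xsq_Ysq_general μ X Z εstar ε Y π₀ α₀ β₀ hZ hZ01 hZmean hXL4 hεstarL2 hεL2 hε0 hindZ
    hindXεstar hindXε hY
end

section
/- Let κ be a probability density on ℝ with ∫|u|κ(u)du < ∞, and suppose for each x the conditional density f_{Y|X}(·|x) is differentiable with derivative bounded uniformly by M'. Then for all t ∈ ℝ, h > 0, (α,β), (α₀,β₀) ∈ ℝ², and g(t) := ∫ f_{Y|X}(t + α₀ + β₀x | x) dF_X(x): | (1/h) ∫∫ κ((t − y + α + βx)/h) f_{Y|X}(y|x) dy dF_X(x) − g(t) | ≤ M' ( |α−α₀| + E|X|·|β−β₀| + h∫|u|κ(u)du ). -/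
open MeasureTheory
open scoped NNReal

/-!
With `c = t + α + βx`, the substitution `y = c - h u` turns
`(1/h) ∫ κ((t - y + α + βx)/h) f(y|x) dy` into `∫ κ(u) f(c - h u | x) du`. Since `∫ κ = 1` and
`f(·|x)` is `M'`-Lipschitz by the mean value theorem, this differs from `f(t + α₀ + β₀x | x)` by
at most `M' (|α - α₀| + |β - β₀| |x| + h ∫ |u| κ(u) du)`; integrating in `x` gives the bound.
The integrals in `x` exist because a nonnegative `K`-Lipschitz density is bounded by `1 + K`.
-/

lemma lipschitzWith_toNNReal_of_abs_deriv_le {φ : ℝ → ℝ} {M : ℝ} (hφ : Differentiable ℝ φ)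
    (hM : ∀ y, |deriv φ y| ≤ M) : LipschitzWith M.toNNReal φ :=
  lipschitzWith_of_nnnorm_deriv_le hφ fun y => by
    rw [← NNReal.coe_le_coe, coe_nnnorm, Real.coe_toNNReal _ ((abs_nonneg _).trans (hM y))]
    exact hM y

lemma LipschitzWith.le_integral_add {g : ℝ → ℝ} {K : ℝ≥0} (hg : LipschitzWith K g)
    (hg0 : 0 ≤ g) (hint : Integrable g) (y : ℝ) : g y ≤ (∫ z, g z) + K := by
  have hpt : ∀ z ∈ Set.Icc y (y + 1), g y ≤ g z + K := by
    intro z hz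
    have hdist := hg.dist_le_mul y z
    rw [Real.dist_eq, Real.dist_eq] at hdist
    have hyz : |y - z| ≤ 1 := abs_le.mpr ⟨by linarith [hz.2], by linarith [hz.1]⟩
    nlinarith [le_abs_self (g y - g z), K.2]
  calc g y = ∫ _ in y..y + 1, g y := by simp
    _ ≤ ∫ z in y..y + 1, (g z + K) :=
        intervalIntegral.integral_mono_on (by linarith) (by simp)
          (hint.intervalIntegrable.add intervalIntegrable_const) hpt
    _ = (∫ z in y..y + 1, g z) + K := by
        rw [intervalIntegral.integral_add hint.intervalIntegrable intervalIntegrable_const]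
        simp
    _ ≤ (∫ z, g z) + K := by
        rw [intervalIntegral.integral_of_le (by linarith)]
        exact add_le_add_left (setIntegral_le_integral hint (ae_of_all _ hg0)) _

lemma integrable_apply_of_lipschitzWith_density {α : Type*} [MeasurableSpace α]
    {μ : Measure α} [IsFiniteMeasure μ] {f : ℝ → α → ℝ} {K : ℝ≥0}
    (hfmeas : Measurable fun p : ℝ × α => f p.1 p.2) (hLip : ∀ x, LipschitzWith K fun y => f y x)
    (hf0 : ∀ y x, 0 ≤ f y x) (hfint : ∀ x, Integrable fun y => f y x)
    (hfdens : ∀ x, ∫ y, f y x = 1) {g : α → ℝ} (hg : Measurable g) :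
    Integrable (fun x => f (g x) x) μ := by
  refine (integrable_const (1 + (K : ℝ))).mono'
    (hfmeas.comp (f := fun x => (g x, x)) (by fun_prop)).aestronglyMeasurable
    (ae_of_all _ fun x => ?_)
  rw [Real.norm_eq_abs, abs_of_nonneg (hf0 _ _), ← hfdens x]
  exact (hLip x).le_integral_add (fun y => hf0 y x) (hfint x) _

lemma integral_mul_comp_sub_div (κ φ : ℝ → ℝ) (c : ℝ) {h : ℝ} (hh : h ≠ 0) :
    ∫ y, κ ((c - y) / h) * φ y = |h| * ∫ u, κ u * φ (c - h * u) := by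
  have hsub : ∀ y, κ ((c - y) / h) * φ y
      = (fun z => κ (z / h) * φ (c - h * (z / h))) (c - y) := by
    intro y
    simp only [mul_div_cancel₀ _ hh, sub_sub_cancel]
  simp_rw [hsub]
  rw [integral_sub_left_eq_self (fun z => κ (z / h) * φ (c - h * (z / h))),
    Measure.integral_comp_div (fun u => κ u * φ (c - h * u)), smul_eq_mul]

section KernelSmoothing

variable {κ φ : ℝ → ℝ} {K : ℝ≥0}

lemma integrable_mul_comp_sub_mul (hφ : LipschitzWith K φ) (hκ : Integrable κ)
    (hκabs : Integrable fun u => |u| * κ u) (c h : ℝ) :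
    Integrable fun u => κ u * φ (c - h * u) := by
  refine ((hκ.norm.const_mul |φ c|).add (hκabs.norm.const_mul (K * |h|))).mono'
    (hκ.aestronglyMeasurable.mul (hφ.continuous.comp (by fun_prop)).aestronglyMeasurable)
    (ae_of_all _ fun u => ?_)
  have hdist := hφ.dist_le_mul (c - h * u) c
  rw [Real.dist_eq, Real.dist_eq, sub_sub_cancel_left, abs_neg, abs_mul] at hdist
  have hφu : |φ (c - h * u)| ≤ |φ c| + K * (|h| * |u|) := by
    linarith [abs_sub_abs_le_abs_sub (φ (c - h * u)) (φ c)]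
  simp only [Pi.add_apply, Real.norm_eq_abs, abs_mul, abs_abs]
  nlinarith [abs_nonneg (κ u)]

lemma abs_integral_mul_comp_sub_sub_le (hφ : LipschitzWith K φ) (hκ0 : ∀ u, 0 ≤ κ u)
    (hκ : Integrable κ) (hκ1 : ∫ u, κ u = 1) (hκabs : Integrable fun u => |u| * κ u)
    (c c' h : ℝ) :
    |(∫ u, κ u * φ (c - h * u)) - φ c'| ≤ K * (|c - c'| + |h| * ∫ u, |u| * κ u) := by
  have hpt : ∀ u, ‖κ u * φ (c - h * u) - κ u * φ c'‖
      ≤ K * |c - c'| * κ u + K * |h| * (|u| * κ u) := by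
    intro u
    have hdist := hφ.dist_le_mul (c - h * u) c'
    rw [Real.dist_eq, Real.dist_eq] at hdist
    have hcu : |c - h * u - c'| ≤ |c - c'| + |h| * |u| := by
      rw [← abs_mul, sub_right_comm]
      exact abs_sub _ _
    rw [Real.norm_eq_abs, ← mul_sub, abs_mul, abs_of_nonneg (hκ0 u)]
    calc κ u * |φ (c - h * u) - φ c'| ≤ κ u * (K * (|c - c'| + |h| * |u|)) :=
          mul_le_mul_of_nonneg_left (hdist.trans (mul_le_mul_of_nonneg_left hcu K.2)) (hκ0 u)
      _ = K * |c - c'| * κ u + K * |h| * (|u| * κ u) := by ring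
  have hbound : Integrable fun u => K * |c - c'| * κ u + K * |h| * (|u| * κ u) :=
    (hκ.const_mul _).add (hκabs.const_mul _)
  calc |(∫ u, κ u * φ (c - h * u)) - φ c'|
      = ‖∫ u, (κ u * φ (c - h * u) - κ u * φ c')‖ := by
        rw [integral_sub (integrable_mul_comp_sub_mul hφ hκ hκabs c h) (hκ.mul_const _),
          integral_mul_const, hκ1, one_mul, Real.norm_eq_abs]
    _ ≤ ∫ u, (K * |c - c'| * κ u + K * |h| * (|u| * κ u)) :=
        norm_integral_le_of_norm_le hbound (ae_of_all _ hpt)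
    _ = K * (|c - c'| + |h| * ∫ u, |u| * κ u) := by
        rw [integral_add (hκ.const_mul _) (hκabs.const_mul _), integral_const_mul,
          integral_const_mul, hκ1]
        ring

end KernelSmoothing

lemma abs_integral_sub_integral_le {α : Type*} [MeasurableSpace α] {μ : Measure α}
    {A B D : α → ℝ} (hA : AEStronglyMeasurable A μ) (hB : Integrable B μ)
    (hD : Integrable D μ) (hAB : ∀ᵐ x ∂μ, |A x - B x| ≤ D x) :
    |∫ x, A x ∂μ - ∫ x, B x ∂μ| ≤ ∫ x, D x ∂μ := by
  have hA' : Integrable A μ := by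
    simpa using (hD.mono' (hA.sub hB.1) (by simpa using hAB)).add hB
  rw [← integral_sub hA' hB]
  exact norm_integral_le_of_norm_le (f := fun x => A x - B x) hD hAB

theorem kernel_smoothing_bias_bound_general
    (κ : ℝ → ℝ) (hκ0 : ∀ u, 0 ≤ κ u)
    (hκint : Integrable κ volume) (hκ1 : ∫ u, κ u = 1)
    (hκabs : Integrable (fun u => |u| * κ u) volume)
    (f : ℝ → ℝ → ℝ) (M' : ℝ)
    (hfmeas : Measurable (fun p : ℝ × ℝ => f p.1 p.2))
    (hfdiff : ∀ x, Differentiable ℝ (fun y => f y x))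
    (hfd : ∀ x y, |deriv (fun y => f y x) y| ≤ M')
    (hf0 : ∀ y x, 0 ≤ f y x)
    (hfint : ∀ x, Integrable (fun y => f y x) volume)
    (hfdens : ∀ x, ∫ y, f y x = 1)
    (ν : Measure ℝ) [IsProbabilityMeasure ν]
    (hX1 : Integrable (fun x => |x|) ν) :
    ∀ (t h α β α₀ β₀ : ℝ), 0 < h →
      |(1 / h) * ∫ x, (∫ y, κ ((t - y + α + β * x) / h) * f y x) ∂ν
          - ∫ x, f (t + α₀ + β₀ * x) x ∂ν|
        ≤ M' * (|α - α₀| + (∫ x, |x| ∂ν) * |β - β₀| + h * ∫ u, |u| * κ u) := by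
  intro t h α β α₀ β₀ hh
  have hM'0 : 0 ≤ M' := (abs_nonneg _).trans (hfd 0 0)
  have hLip : ∀ x, LipschitzWith M'.toNNReal fun y => f y x := fun x =>
    lipschitzWith_toNNReal_of_abs_deriv_le (hfdiff x) (hfd x)
  set I := ∫ u, |u| * κ u
  set A : ℝ → ℝ := fun x => ∫ u, κ u * f (t + α + β * x - h * u) x
  have hLHS : (1 / h) * ∫ x, (∫ y, κ ((t - y + α + β * x) / h) * f y x) ∂ν = ∫ x, A x ∂ν := by
    simp_rw [sub_add_eq_add_sub, integral_mul_comp_sub_div _ _ _ hh.ne', abs_of_pos hh,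
      integral_const_mul]
    field_simp
    rfl
  have hA : AEStronglyMeasurable A ν :=
    (hκint.aestronglyMeasurable.comp_snd.mul
      (hfmeas.comp (f := fun p : ℝ × ℝ => (t + α + β * p.1 - h * p.2, p.1))
        (by fun_prop)).aestronglyMeasurable).integral_prod_right'
  have hB : Integrable (fun x => f (t + α₀ + β₀ * x) x) ν :=
    integrable_apply_of_lipschitzWith_density hfmeas hLip hf0 hfint hfdens (by fun_prop)
  have hAB : ∀ x, |A x - f (t + α₀ + β₀ * x) x|
      ≤ M' * (|α - α₀| + h * I) + M' * |β - β₀| * |x| := by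
    intro x
    refine (abs_integral_mul_comp_sub_sub_le (hLip x) hκ0 hκint hκ1 hκabs _ _ _).trans ?_
    have hc : |t + α + β * x - (t + α₀ + β₀ * x)| ≤ |α - α₀| + |β - β₀| * |x| := by
      rw [← abs_mul, show t + α + β * x - (t + α₀ + β₀ * x) = (α - α₀) + (β - β₀) * x by ring]
      exact abs_add_le _ _
    have := mul_le_mul_of_nonneg_left (add_le_add_right hc (h * I)) hM'0
    rw [Real.coe_toNNReal _ hM'0, abs_of_pos hh]
    linarith
  have hD : Integrable (fun x => M' * (|α - α₀| + h * I) + M' * |β - β₀| * |x|) ν :=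
    (integrable_const _).add (hX1.const_mul _)
  rw [hLHS]
  refine (abs_integral_sub_integral_le hA hB hD (ae_of_all _ hAB)).trans_eq ?_
  rw [integral_add (integrable_const _) (hX1.const_mul _), integral_const, integral_const_mul]
  simp only [probReal_univ, one_smul]
  ring

/-- Uniform bias bound for the kernel estimator of the density: if `κ` is a probability
density with finite first absolute moment and the conditional densities `f(·|x)` are
differentiable with derivative uniformly bounded by `M'`, then for all `t`, `h > 0`,
`(α,β)`, `(α₀,β₀)`, with `g(t) = ∫ f(t + α₀ + β₀x | x) dF_X(x)`,
`|(1/h)∫∫ κ((t − y + α + βx)/h) f(y|x) dy dF_X(x) − g(t)|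
  ≤ M'(|α−α₀| + E|X|·|β−β₀| + h∫|u|κ(u)du)`. -/
theorem kernel_smoothing_bias_bound
    (κ : ℝ → ℝ) (hκmeas : Measurable κ) (hκ0 : ∀ u, 0 ≤ κ u)
    (hκint : Integrable κ volume) (hκ1 : ∫ u, κ u = 1)
    (hκabs : Integrable (fun u => |u| * κ u) volume)
    (f : ℝ → ℝ → ℝ) (M' : ℝ) (hM' : 0 < M')
    (hfmeas : Measurable (fun p : ℝ × ℝ => f p.1 p.2))
    (hfdiff : ∀ x, Differentiable ℝ (fun y => f y x))
    (hfd : ∀ x y, |deriv (fun y => f y x) y| ≤ M')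
    (hf0 : ∀ y x, 0 ≤ f y x)
    (hfint : ∀ x, Integrable (fun y => f y x) volume)
    (hfdens : ∀ x, ∫ y, f y x = 1)
    (ν : Measure ℝ) [IsProbabilityMeasure ν]
    (hX1 : Integrable (fun x => |x|) ν) :
    ∀ (t h α β α₀ β₀ : ℝ), 0 < h →
      |(1 / h) * ∫ x, (∫ y, κ ((t - y + α + β * x) / h) * f y x) ∂ν
          - ∫ x, f (t + α₀ + β₀ * x) x ∂ν|
        ≤ M' * (|α - α₀| + (∫ x, |x| ∂ν) * |β - β₀| + h * ∫ u, |u| * κ u) :=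
  kernel_smoothing_bias_bound_general κ hκ0 hκint hκ1 hκabs f M' hfmeas hfdiff hfd hf0 hfint hfdens
    ν hX1
end
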